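/- Let M be a 2×2 complex matrix that is not diagonalizable, and let ψ : Fin 2 × Fin 2 × Fin 2 → ℂ be the three-qubit state with coefficients ψ(i,0,k) = δ_{ik} and ψ(i,1,k) = M(i,k) (coefficient matrix (I₂ | M)). Then ψ is SLOCC-equivalent to the W state |100⟩ + |010⟩ + |001⟩. -/

import Mathlib

/-!
View a three-qubit state as the pencil of its middle slices `S_b`, here `(I, M)`; the `j`-th
slice of its image under `A₁ ⊗ A₂ ⊗ A₃` is `A₁ (∑_b A₂ j b • S_b) A₃ᵀ`. Conjugating `M` to an upper triangular `T`
(an eigenvector of `M` exists over `ℂ`), non-diagonalizability forces `T = μ I + x E₀₁` with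
`x ≠ 0`; a shear on the middle qubit then turns the pencil `(I, T)` into `(I, E₀₁)`, and swapping
the basis of the last qubit gives `(σₓ, E₀₀)`, the slices of the W state.
-/

/-- The three-qubit W state `|100⟩ + |010⟩ + |001⟩`. -/
noncomputable def W3 : Fin 2 × Fin 2 × Fin 2 → ℂ :=
  fun x => if x = (1, 0, 0) ∨ x = (0, 1, 0) ∨ x = (0, 0, 1) then 1 else 0

open Matrix

namespace Matrix

variable {n K : Type*} [Fintype n] [DecidableEq n]

def IsDiagonalizable [CommRing K] (M : Matrix n n K) : Prop :=
  ∃ P : Matrix n n K, IsUnit P ∧ (P⁻¹ * M * P).IsDiag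

section CommRing

variable [CommRing K] {M P : Matrix n n K}

theorem isDiagonalizable_of_mul_eq_mul_diagonal (hP : IsUnit P) {d : n → K}
    (h : M * P = P * diagonal d) : M.IsDiagonalizable := by
  refine ⟨P, hP, ?_⟩
  rw [mul_assoc, h, nonsing_inv_mul_cancel_left _ _ ((isUnit_iff_isUnit_det P).mp hP)]
  exact isDiag_diagonal d

theorem IsDiagonalizable.of_conj (hP : IsUnit P) (h : (P⁻¹ * M * P).IsDiagonalizable) :
    M.IsDiagonalizable := by
  obtain ⟨Q, hQ, hdiag⟩ := h
  refine ⟨P * Q, hP.mul hQ, ?_⟩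
  simpa only [mul_inv_rev, mul_assoc] using hdiag

theorem col_conj_eq_of_mulVec_col_eq (hP : IsUnit P) {j : n} {μ : K}
    (h : M *ᵥ P.col j = μ • P.col j) : (P⁻¹ * M * P).col j = μ • Pi.single j 1 := by
  rw [← mulVec_single_one, ← mulVec_mulVec, mulVec_single_one, ← mulVec_mulVec, h,
    mulVec_smul, ← mulVec_single_one, mulVec_mulVec,
    nonsing_inv_mul _ ((isUnit_iff_isUnit_det P).mp hP), one_mulVec]

theorem conj_smul_one_add_smul (hP : IsUnit P) (α β : K) :
    P⁻¹ * (α • 1 + β • M) * P = α • 1 + β • (P⁻¹ * M * P) := by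
  rw [Matrix.mul_add, Matrix.add_mul, Matrix.mul_smul, Matrix.smul_mul, Matrix.mul_smul,
    Matrix.smul_mul, Matrix.mul_one, nonsing_inv_mul _ ((isUnit_iff_isUnit_det P).mp hP)]

end CommRing

section Field

variable [Field K]

theorem exists_isUnit_col_zero_eq {v : Fin 2 → K} (hv : v ≠ 0) :
    ∃ P : Matrix (Fin 2) (Fin 2) K, IsUnit P ∧ P.col 0 = v := by
  have hcoord : v 0 ≠ 0 ∨ v 1 ≠ 0 := by
    by_contra! h
    exact hv (funext fun i => by fin_cases i <;> simp [h])
  rcases hcoord with h0 | h1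
  · refine ⟨!![v 0, 0; v 1, 1], ?_, ?_⟩
    · simpa [isUnit_iff_isUnit_det, det_fin_two_of] using h0
    · ext i; fin_cases i <;> rfl
  · refine ⟨!![v 0, 1; v 1, 0], ?_, ?_⟩
    · simpa [isUnit_iff_isUnit_det, det_fin_two_of] using h1
    · ext i; fin_cases i <;> rfl

theorem exists_isUnit_conj_apply_one_zero_eq_zero [IsAlgClosed K] (M : Matrix (Fin 2) (Fin 2) K) :
    ∃ P : Matrix (Fin 2) (Fin 2) K, IsUnit P ∧ (P⁻¹ * M * P) 1 0 = 0 := by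
  obtain ⟨μ, hμ⟩ := Module.End.exists_eigenvalue (toLin' M)
  obtain ⟨v, hv, hv0⟩ := hμ.exists_hasEigenvector
  obtain ⟨P, hP, rfl⟩ := exists_isUnit_col_zero_eq hv0
  refine ⟨P, hP, ?_⟩
  have h := col_conj_eq_of_mulVec_col_eq hP (Module.End.mem_eigenspace_iff.mp hv)
  simpa using congrFun h 1

theorem diag_eq_and_ne_zero_of_not_isDiagonalizable {T : Matrix (Fin 2) (Fin 2) K}
    (hT : T 1 0 = 0) (hnd : ¬ T.IsDiagonalizable) : T 0 0 = T 1 1 ∧ T 0 1 ≠ 0 := by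
  constructor
  · by_contra hne
    refine hnd (isDiagonalizable_of_mul_eq_mul_diagonal (P := !![1, T 0 1; 0, T 1 1 - T 0 0])
      (d := ![T 0 0, T 1 1]) ?_ ?_)
    · simpa [isUnit_iff_isUnit_det, det_fin_two_of, sub_eq_zero] using Ne.symm hne
    · ext i j; fin_cases i <;> fin_cases j <;> simp [mul_apply, hT] <;> ring
  · intro h01
    refine hnd (isDiagonalizable_of_mul_eq_mul_diagonal (P := 1) (d := ![T 0 0, T 1 1])
      isUnit_one ?_)
    ext i j; fin_cases i <;> fin_cases j <;> simp [hT, h01]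

end Field

end Matrix

section MiddleSlices

variable {R ι₁ ι₂ ι₃ κ₁ κ₂ κ₃ : Type*} [CommSemiring R] [Fintype ι₁] [Fintype ι₂] [Fintype ι₃]

def middleSlice (ψ : ι₁ × ι₂ × ι₃ → R) (b : ι₂) : Matrix ι₁ ι₃ R :=
  of fun a c => ψ (a, b, c)

theorem sum_mul_mul_mul_eq_mul_sum_smul_middleSlice_mul (A₁ : Matrix κ₁ ι₁ R)
    (A₂ : Matrix κ₂ ι₂ R) (A₃ : Matrix κ₃ ι₃ R) (ψ : ι₁ × ι₂ × ι₃ → R) (i : κ₁) (j : κ₂) (k : κ₃) :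
    ∑ a, ∑ b, ∑ c, A₁ i a * A₂ j b * A₃ k c * ψ (a, b, c) =
      (A₁ * (∑ b, A₂ j b • middleSlice ψ b) * A₃ᵀ) i k := by
  simp only [mul_apply, Matrix.sum_apply, Matrix.smul_apply, middleSlice, of_apply, transpose_apply,
    smul_eq_mul, Finset.mul_sum, Finset.sum_mul]
  symm
  rw [Finset.sum_comm]
  refine Finset.sum_congr rfl fun a _ => ?_
  rw [Finset.sum_comm]
  exact Finset.sum_congr rfl fun b _ => Finset.sum_congr rfl fun c _ => by ring

end MiddleSlices

/-- If `M` is a non-diagonalizable `2×2` complex matrix, the three-qubit state with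
coefficient matrix `(I₂ | M)` is SLOCC-equivalent to the W state. -/
theorem coeff_I_M_nondiagonalizable_slocc_equiv_w
    (M : Matrix (Fin 2) (Fin 2) ℂ)
    (hM : ¬ ∃ P : Matrix (Fin 2) (Fin 2) ℂ, IsUnit P ∧ (P⁻¹ * M * P).IsDiag)
    (ψ : Fin 2 × Fin 2 × Fin 2 → ℂ)
    (hψ0 : ∀ i k : Fin 2, ψ (i, 0, k) = if i = k then 1 else 0)
    (hψ1 : ∀ i k : Fin 2, ψ (i, 1, k) = M i k) :
    ∃ A₁ A₂ A₃ : Matrix (Fin 2) (Fin 2) ℂ,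
      IsUnit A₁ ∧ IsUnit A₂ ∧ IsUnit A₃ ∧
      ∀ i j k : Fin 2,
        W3 (i, j, k) =
          ∑ a : Fin 2, ∑ b : Fin 2, ∑ c : Fin 2,
            A₁ i a * A₂ j b * A₃ k c * ψ (a, b, c) := by
  obtain ⟨P, hP, hT⟩ := exists_isUnit_conj_apply_one_zero_eq_zero M
  have hnd : ¬ (P⁻¹ * M * P).IsDiagonalizable := fun h => hM (h.of_conj hP)
  generalize hTM : P⁻¹ * M * P = T at hT hnd
  obtain ⟨hdiag, hx⟩ := diag_eq_and_ne_zero_of_not_isDiagonalizable hT hnd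
  have hslices (j : Fin 2) (A₂ : Matrix (Fin 2) (Fin 2) ℂ) :
      ∑ b, A₂ j b • middleSlice ψ b = A₂ j 0 • 1 + A₂ j 1 • M := by
    rw [Fin.sum_univ_two]
    congr 2 <;> ext a c <;> simp [middleSlice, hψ0, hψ1, one_apply]
  refine ⟨P⁻¹, !![1, 0; -T 0 0 / T 0 1, 1 / T 0 1], (P * !![0, 1; 1, 0])ᵀ,
    isUnit_nonsing_inv_iff.mpr hP, ?_, (isUnit_transpose _).mpr (hP.mul ?_), fun i j k => ?_⟩
  · simpa [isUnit_iff_isUnit_det, det_fin_two_of] using hx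
  · simp [isUnit_iff_isUnit_det, det_fin_two_of]
  rw [sum_mul_mul_mul_eq_mul_sum_smul_middleSlice_mul, hslices, transpose_transpose,
    ← Matrix.mul_assoc, conj_smul_one_add_smul hP, hTM]
  fin_cases i <;> fin_cases j <;> fin_cases k <;> simp [W3, mul_apply, hT, hdiag] <;>
    field_simp <;> ring
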